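/- Let A be a commutative ring in which 2 is invertible and let F, a ∈ A. Let B := A[u, v]/(uv − F, u³ + v³ − 2a), let τ be the A-algebra involution of B with τ(u) = v and τ(v) = u, and set w := u + v ∈ B. Then w³ − 3·F·w − 2a = 0 in B, the subalgebra B^τ of τ-invariant elements is a free A-module with basis {1, w, w²}, and B^τ is isomorphic as an A-algebra to A[t]/(t³ − 3·F·t − 2a). -/

import Mathlib

noncomputable section

/-- The ideal `(uv − F, u³ + v³ − 2a)` in `A[u, v]`. -/
def dihedralIdeal (A : Type) [CommRing A] (n : ℕ) (F a : A) :
    Ideal (MvPolynomial (Fin 2) A) :=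
  Ideal.span {MvPolynomial.X 0 * MvPolynomial.X 1 - MvPolynomial.C F,
    MvPolynomial.X 0 ^ n + MvPolynomial.X 1 ^ n - MvPolynomial.C (2 * a)}

/-- The ring `B = A[u, v]/(uv − F, uⁿ + vⁿ − 2a)`, the coordinate ring of the simple
dihedral cover of `Spec A` determined by the data `F` and `a`. -/
abbrev DihedralCoverRing (A : Type) [CommRing A] (n : ℕ) (F a : A) : Type :=
  MvPolynomial (Fin 2) A ⧸ dihedralIdeal A n F a

/-- The image `u` of the first variable in `B`. -/
def uElt (A : Type) [CommRing A] (n : ℕ) (F a : A) : DihedralCoverRing A n F a :=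
  Ideal.Quotient.mk _ (MvPolynomial.X 0)

/-- The image `v` of the second variable in `B`. -/
def vElt (A : Type) [CommRing A] (n : ℕ) (F a : A) : DihedralCoverRing A n F a :=
  Ideal.Quotient.mk _ (MvPolynomial.X 1)

/-- The subalgebra of `τ`-invariant elements of `B`. -/
def fixedSubalgebra (A : Type) [CommRing A] (n : ℕ) (F a : A)
    (τ : DihedralCoverRing A n F a ≃ₐ[A] DihedralCoverRing A n F a) :
    Subalgebra A (DihedralCoverRing A n F a) :=
  AlgHom.equalizer (τ : DihedralCoverRing A n F a ≃ₐ[A] DihedralCoverRing A n F a)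
    ((AlgEquiv.refl : DihedralCoverRing A n F a ≃ₐ[A] DihedralCoverRing A n F a) :
      DihedralCoverRing A n F a →ₐ[A] DihedralCoverRing A n F a)

/-!
Let `T = A[t]/(t³ − 3Ft − 2a)` and let `D = T[r]/(r² − tr + F)`: in `B`, `u` and `v` are the two
roots of `X² − (u + v)X + uv = X² − wX + F`, and `w` satisfies the cubic. So `u ↦ r`, `v ↦ t − r`
defines `B → D`, with left inverse `r ↦ u`, `t ↦ u + v`, carrying `τ` to the `T`-involution
`r ↦ t − r` of `D`. Since `D` is free over `T` on `1, r`, the element `c₀ + c₁r` is fixed exactly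
when `2c₁ = 0`, i.e. when it lies in `T` because `2` is a unit. Hence `B^τ` is the isomorphic
image of `T` under `t ↦ u + v`, and `T` is free over `A` on `1, t, t²`.
-/

open Polynomial

namespace AdjoinRoot

def powerBasisFin {R : Type} [CommRing R] {g : R[X]} (hg : g.Monic) {n : ℕ}
    (hn : g.natDegree = n) : Module.Basis (Fin n) R (AdjoinRoot g) :=
  (powerBasis' hg).basis.reindex (finCongr hn)

theorem powerBasisFin_apply {R : Type} [CommRing R] {g : R[X]} (hg : g.Monic) {n : ℕ}
    (hn : g.natDegree = n) (i : Fin n) : powerBasisFin hg hn i = root g ^ (i : ℕ) := by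
  rw [powerBasisFin, Module.Basis.reindex_apply, PowerBasis.basis_eq_pow]
  rfl

end AdjoinRoot

namespace DihedralCover

section Quadratic

variable {C : Type} [CommRing C] (s p : C)

def quadratic : C[X] := X ^ 2 - Polynomial.C s * X + Polynomial.C p

theorem quadratic_monic : (quadratic s p).Monic := by
  unfold quadratic; monicity!

theorem natDegree_quadratic [Nontrivial C] : (quadratic s p).natDegree = 2 := by
  unfold quadratic; compute_degree!

theorem algebraMap_adjoinRoot_quadratic_injective :
    Function.Injective (algebraMap C (AdjoinRoot (quadratic s p))) := by
  nontriviality C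
  have := nontrivial_of_ne _ _
    ((AdjoinRoot.powerBasisFin (quadratic_monic s p) (natDegree_quadratic s p)).ne_zero 0)
  have := (quadratic_monic s p).free_adjoinRoot
  exact FaithfulSMul.algebraMap_injective C _

local notation "D" => AdjoinRoot (quadratic s p)
local notation "r" => AdjoinRoot.root (quadratic s p)

theorem eval₂_quadratic {S : Type} [CommRing S] (f : C →+* S) (x : S) :
    (quadratic s p).eval₂ f x = x ^ 2 - f s * x + f p := by
  simp [quadratic]

theorem root_quadratic_sq : r ^ 2 = algebraMap C D s * r - algebraMap C D p := by
  have h := AdjoinRoot.eval₂_root (quadratic s p)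
  rw [eval₂_quadratic, ← AdjoinRoot.algebraMap_eq] at h
  linear_combination h

theorem exists_eq_algebraMap_add_mul_root (x : D) :
    ∃ c₀ c₁ : C, x = algebraMap C D c₀ + algebraMap C D c₁ * r := by
  rcases subsingleton_or_nontrivial C with hC | hC
  · have := Module.subsingleton C D
    exact ⟨0, 0, Subsingleton.elim _ _⟩
  set b := AdjoinRoot.powerBasisFin (quadratic_monic s p) (natDegree_quadratic s p)
  refine ⟨b.repr x 0, b.repr x 1, ?_⟩
  conv_lhs => rw [← b.sum_repr x]
  simp [b, Fin.sum_univ_two, AdjoinRoot.powerBasisFin_apply, Algebra.smul_def]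

theorem eq_zero_of_algebraMap_add_mul_root_eq_zero {c₀ c₁ : C}
    (h : algebraMap C D c₀ + algebraMap C D c₁ * r = 0) : c₀ = 0 ∧ c₁ = 0 := by
  nontriviality C
  set b := AdjoinRoot.powerBasisFin (quadratic_monic s p) (natDegree_quadratic s p)
  have hb := Fintype.linearIndependent_iff.mp b.linearIndependent ![c₀, c₁]
    (by simpa [b, Fin.sum_univ_two, AdjoinRoot.powerBasisFin_apply, Algebra.smul_def] using h)
  exact ⟨hb 0, hb 1⟩

def swapRoot : D →ₐ[C] D :=
  AdjoinRoot.liftAlgHom _ (Algebra.ofId C D) (algebraMap C D s - r) <| by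
    rw [eval₂_quadratic]
    simp only [AlgHom.coe_toRingHom, Algebra.ofId_apply]
    linear_combination root_quadratic_sq s p

theorem swapRoot_root : swapRoot s p r = algebraMap C D s - r :=
  AdjoinRoot.liftAlgHom_root _ _ _ _

theorem mem_range_of_swapRoot_eq (h2 : IsUnit (2 : C)) {x : D} (hx : swapRoot s p x = x) :
    x ∈ (algebraMap C D).range := by
  obtain ⟨c₀, c₁, rfl⟩ := exists_eq_algebraMap_add_mul_root s p x
  rw [map_add, map_mul, AlgHom.commutes, AlgHom.commutes, swapRoot_root] at hx
  have hc₁ : c₁ = 0 := by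
    refine h2.mul_right_eq_zero.mp (neg_eq_zero.mp
      (eq_zero_of_algebraMap_add_mul_root_eq_zero s p (c₀ := c₁ * s) ?_).2)
    simp only [map_neg, map_mul, map_ofNat]
    linear_combination hx
  exact ⟨c₀, by simp [hc₁]⟩

end Quadratic

section Cubic

variable {A : Type} [CommRing A] (F a : A)

def cubic : A[X] := X ^ 3 - Polynomial.C (3 * F) * X - Polynomial.C (2 * a)

theorem cubic_monic : (cubic F a).Monic := by
  unfold cubic; monicity!

theorem natDegree_cubic [Nontrivial A] : (cubic F a).natDegree = 3 := by
  unfold cubic; compute_degree!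

theorem eval₂_cubic {S : Type} [CommRing S] (f : A →+* S) (x : S) :
    (cubic F a).eval₂ f x = x ^ 3 - f (3 * F) * x - f (2 * a) := by
  simp [cubic]

local notation "T" => AdjoinRoot (cubic F a)
local notation "t" => AdjoinRoot.root (cubic F a)

theorem root_cubic_pow_three : t ^ 3 = algebraMap A T (3 * F) * t + algebraMap A T (2 * a) := by
  have h := AdjoinRoot.eval₂_root (cubic F a)
  rw [eval₂_cubic, ← AdjoinRoot.algebraMap_eq] at h
  linear_combination h

theorem exists_basis_cubic : ∃ b : Module.Basis (Fin 3) A T, ∀ i, b i = t ^ (i : ℕ) := by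
  rcases subsingleton_or_nontrivial A with hA | hA
  · have := Module.subsingleton A T
    exact ⟨.ofRepr (LinearEquiv.ofSubsingleton _ _), fun _ => Subsingleton.elim _ _⟩
  exact ⟨_, AdjoinRoot.powerBasisFin_apply (cubic_monic F a) (natDegree_cubic F a)⟩

end Cubic

section Cover

variable {A : Type} [CommRing A] (F a : A)

local notation "B" => DihedralCoverRing A 3 F a
local notation "u" => uElt A 3 F a
local notation "v" => vElt A 3 F a
local notation "T" => AdjoinRoot (cubic F a)
local notation "t" => AdjoinRoot.root (cubic F a)
local notation "D" => AdjoinRoot (quadratic t (algebraMap A T F))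
local notation "r" => AdjoinRoot.root (quadratic t (algebraMap A T F))

theorem mem_fixedSubalgebra {n : ℕ} {τ : DihedralCoverRing A n F a ≃ₐ[A] DihedralCoverRing A n F a}
    {x : DihedralCoverRing A n F a} : x ∈ fixedSubalgebra A n F a τ ↔ τ x = x :=
  AlgHom.mem_equalizer _ _ _

theorem algebraMap_dihedralCoverRing (x : A) :
    algebraMap A B x = Ideal.Quotient.mk (dihedralIdeal A 3 F a) (MvPolynomial.C x) := rfl

theorem uElt_mul_vElt : u * v = algebraMap A B F := by
  rw [uElt, vElt, algebraMap_dihedralCoverRing, ← map_mul, Ideal.Quotient.eq]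
  exact Ideal.subset_span (Set.mem_insert _ _)

theorem uElt_pow_three_add_vElt_pow_three : u ^ 3 + v ^ 3 = algebraMap A B (2 * a) := by
  rw [uElt, vElt, algebraMap_dihedralCoverRing, ← map_pow, ← map_pow, ← map_add,
    Ideal.Quotient.eq]
  exact Ideal.subset_span (Set.mem_insert_of_mem _ rfl)

theorem eval₂_cubic_uElt_add_vElt : (cubic F a).eval₂ (algebraMap A B) (u + v) = 0 := by
  simp only [eval₂_cubic, map_mul, map_ofNat]
  have h := uElt_pow_three_add_vElt_pow_three F a
  rw [map_mul, map_ofNat] at h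
  linear_combination 3 * (u + v) * uElt_mul_vElt F a + h

theorem algHom_ext {S : Type} [Semiring S] [Algebra A S] {f g : B →ₐ[A] S}
    (hu : f u = g u) (hv : f v = g v) : f = g := by
  refine Ideal.Quotient.algHom_ext A (MvPolynomial.algHom_ext fun i => ?_)
  fin_cases i
  exacts [hu, hv]

def lift {S : Type} [CommRing S] [Algebra A S] (x y : S) (hxy : x * y = algebraMap A S F)
    (hxy₃ : x ^ 3 + y ^ 3 = algebraMap A S (2 * a)) : B →ₐ[A] S :=
  Ideal.Quotient.liftₐ _ (MvPolynomial.aeval ![x, y]) fun _ hq => RingHom.mem_ker.mp <|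
    (Ideal.span_le (I := RingHom.ker (MvPolynomial.aeval ![x, y]))).mpr
      (by rintro _ (rfl | rfl) <;> simp [hxy, hxy₃]) hq

section Lift

variable {S : Type} [CommRing S] [Algebra A S] {x y : S} (hxy : x * y = algebraMap A S F)
  (hxy₃ : x ^ 3 + y ^ 3 = algebraMap A S (2 * a))

theorem lift_uElt : lift F a x y hxy hxy₃ u = x :=
  MvPolynomial.aeval_X _ 0

theorem lift_vElt : lift F a x y hxy hxy₃ v = y :=
  MvPolynomial.aeval_X _ 1

end Lift

def cubicToCover : T →ₐ[A] B :=
  AdjoinRoot.liftAlgHom _ (Algebra.ofId A B) (u + v) (eval₂_cubic_uElt_add_vElt F a)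

theorem cubicToCover_root : cubicToCover F a t = u + v :=
  AdjoinRoot.liftAlgHom_root _ _ _ _

theorem root_quadratic_sq' : r ^ 2 = algebraMap T D t * r - algebraMap A D F := by
  rw [IsScalarTower.algebraMap_apply A T D]
  exact root_quadratic_sq _ _

theorem root_mul_sub_root : r * (algebraMap T D t - r) = algebraMap A D F := by
  linear_combination -root_quadratic_sq' F a

theorem root_pow_three_add_sub_root_pow_three :
    r ^ 3 + (algebraMap T D t - r) ^ 3 = algebraMap A D (2 * a) := by
  have ht := congr(algebraMap T D $(root_cubic_pow_three F a))
  simp only [map_pow, map_add, map_mul, ← IsScalarTower.algebraMap_apply, map_ofNat] at ht ⊢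
  linear_combination ht + 3 * algebraMap T D t * root_quadratic_sq' F a

def coverToQuadratic : B →ₐ[A] D :=
  lift F a r (algebraMap T D t - r) (root_mul_sub_root F a)
    (root_pow_three_add_sub_root_pow_three F a)

def quadraticToCover : D →ₐ[A] B :=
  AdjoinRoot.liftAlgHom _ (cubicToCover F a) u <| by
    rw [eval₂_quadratic]
    simp only [AlgHom.coe_toRingHom, cubicToCover_root, AlgHom.commutes]
    linear_combination -uElt_mul_vElt F a

theorem coverToQuadratic_uElt : coverToQuadratic F a u = r :=
  lift_uElt F a _ _

theorem coverToQuadratic_vElt : coverToQuadratic F a v = algebraMap T D t - r :=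
  lift_vElt F a _ _

theorem quadraticToCover_root : quadraticToCover F a r = u :=
  AdjoinRoot.liftAlgHom_root _ _ _ _

theorem quadraticToCover_algebraMap (c : T) :
    quadraticToCover F a (algebraMap T D c) = cubicToCover F a c :=
  AdjoinRoot.liftAlgHom_of _ _ _ _ c

theorem quadraticToCover_comp_coverToQuadratic :
    (quadraticToCover F a).comp (coverToQuadratic F a) = AlgHom.id A B := by
  apply algHom_ext
  · rw [AlgHom.comp_apply, coverToQuadratic_uElt, quadraticToCover_root, AlgHom.id_apply]
  · rw [AlgHom.comp_apply, coverToQuadratic_vElt, map_sub, quadraticToCover_root,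
      quadraticToCover_algebraMap, cubicToCover_root, AlgHom.id_apply, add_sub_cancel_left]

theorem coverToQuadratic_comp_cubicToCover :
    (coverToQuadratic F a).comp (cubicToCover F a) = IsScalarTower.toAlgHom A T D := by
  apply AdjoinRoot.algHom_ext
  rw [AlgHom.comp_apply, cubicToCover_root, map_add, coverToQuadratic_uElt,
    coverToQuadratic_vElt, add_sub_cancel, IsScalarTower.coe_toAlgHom']

theorem cubicToCover_injective : Function.Injective (cubicToCover F a) := by
  have h : Function.Injective (IsScalarTower.toAlgHom A T D) :=
    algebraMap_adjoinRoot_quadratic_injective t (algebraMap A T F)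
  rw [← coverToQuadratic_comp_cubicToCover, AlgHom.coe_comp] at h
  exact h.of_comp

theorem coverToQuadratic_apply_eq_swapRoot {τ : B ≃ₐ[A] B} (hτu : τ u = v)
    (hτv : τ v = u) (x : B) :
    coverToQuadratic F a (τ x) = swapRoot t (algebraMap A T F) (coverToQuadratic F a x) := by
  suffices h : (coverToQuadratic F a).comp τ.toAlgHom =
      ((swapRoot t (algebraMap A T F)).restrictScalars A).comp (coverToQuadratic F a) from
    congr($h x)
  apply algHom_ext
  · simp only [AlgHom.comp_apply, AlgEquiv.coe_toAlgHom, hτu,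
      AlgHom.restrictScalars_apply, coverToQuadratic_uElt, coverToQuadratic_vElt, swapRoot_root]
  · simp only [AlgHom.comp_apply, AlgEquiv.coe_toAlgHom, hτv,
      AlgHom.restrictScalars_apply, coverToQuadratic_uElt, coverToQuadratic_vElt, map_sub,
      swapRoot_root, AlgHom.commutes, sub_sub_cancel]

theorem range_cubicToCover_le_fixedSubalgebra {τ : B ≃ₐ[A] B} (hτu : τ u = v)
    (hτv : τ v = u) : (cubicToCover F a).range ≤ fixedSubalgebra A 3 F a τ := by
  rintro _ ⟨c, rfl⟩
  rw [mem_fixedSubalgebra]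
  have h : τ.toAlgHom.comp (cubicToCover F a) = cubicToCover F a := by
    apply AdjoinRoot.algHom_ext
    rw [AlgHom.comp_apply, cubicToCover_root, AlgEquiv.coe_toAlgHom, map_add, hτu, hτv, add_comm]
  exact congr($h c)

theorem fixedSubalgebra_le_range_cubicToCover (h2 : IsUnit (2 : A)) {τ : B ≃ₐ[A] B}
    (hτu : τ u = v) (hτv : τ v = u) : fixedSubalgebra A 3 F a τ ≤ (cubicToCover F a).range := by
  intro x hx
  rw [mem_fixedSubalgebra] at hx
  have hψ : swapRoot t (algebraMap A T F) (coverToQuadratic F a x) = coverToQuadratic F a x := by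
    rw [← coverToQuadratic_apply_eq_swapRoot F a hτu hτv, hx]
  have h2' : IsUnit (2 : T) := map_ofNat (algebraMap A T) 2 ▸ h2.map (algebraMap A T)
  obtain ⟨c, hc⟩ := mem_range_of_swapRoot_eq _ _ h2' hψ
  refine ⟨c, ?_⟩
  calc cubicToCover F a c = quadraticToCover F a (coverToQuadratic F a x) := by
        rw [← hc, quadraticToCover_algebraMap]
    _ = x := congr($(quadraticToCover_comp_coverToQuadratic F a) x)

def fixedSubalgebraEquiv (h2 : IsUnit (2 : A)) {τ : B ≃ₐ[A] B} (hτu : τ u = v)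
    (hτv : τ v = u) : T ≃ₐ[A] fixedSubalgebra A 3 F a τ :=
  (AlgEquiv.ofInjective _ (cubicToCover_injective F a)).trans
    (Subalgebra.equivOfEq _ _ (le_antisymm (range_cubicToCover_le_fixedSubalgebra F a hτu hτv)
      (fixedSubalgebra_le_range_cubicToCover F a h2 hτu hτv)))

theorem coe_fixedSubalgebraEquiv (h2 : IsUnit (2 : A)) {τ : B ≃ₐ[A] B} (hτu : τ u = v)
    (hτv : τ v = u) (c : T) :
    (fixedSubalgebraEquiv F a h2 hτu hτv c : B) = cubicToCover F a c :=
  rfl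

end Cover

end DihedralCover

set_option synthInstance.maxHeartbeats 400000 in
theorem dihedralCoverRing_tau_invariants_triple_cover
    (A : Type) [CommRing A] (h2 : IsUnit (2 : A)) (F a : A)
    (τ : DihedralCoverRing A 3 F a ≃ₐ[A] DihedralCoverRing A 3 F a)
    (hτu : τ (uElt A 3 F a) = vElt A 3 F a)
    (hτv : τ (vElt A 3 F a) = uElt A 3 F a) :
    (uElt A 3 F a + vElt A 3 F a) ^ 3 -
        algebraMap A (DihedralCoverRing A 3 F a) (3 * F) *
          (uElt A 3 F a + vElt A 3 F a) -
        algebraMap A (DihedralCoverRing A 3 F a) (2 * a) = 0 ∧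
    (∃ b : Module.Basis (Fin 3) A (fixedSubalgebra A 3 F a τ),
      (b 0 : DihedralCoverRing A 3 F a) = 1 ∧
      (b 1 : DihedralCoverRing A 3 F a) = uElt A 3 F a + vElt A 3 F a ∧
      (b 2 : DihedralCoverRing A 3 F a) = (uElt A 3 F a + vElt A 3 F a) ^ 2) ∧
    Nonempty ((fixedSubalgebra A 3 F a τ) ≃ₐ[A]
      AdjoinRoot (Polynomial.X ^ 3 - Polynomial.C (3 * F) * Polynomial.X -
        Polynomial.C (2 * a) : Polynomial A)) := by
  obtain ⟨b, hb⟩ := DihedralCover.exists_basis_cubic F a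
  let e := DihedralCover.fixedSubalgebraEquiv F a h2 hτu hτv
  have hbe (i : Fin 3) : (b.map e.toLinearEquiv i : DihedralCoverRing A 3 F a) =
      (uElt A 3 F a + vElt A 3 F a) ^ (i : ℕ) := by
    rw [Module.Basis.map_apply, AlgEquiv.toLinearEquiv_apply,
      DihedralCover.coe_fixedSubalgebraEquiv, hb, map_pow, DihedralCover.cubicToCover_root]
  refine ⟨?_, ⟨b.map e.toLinearEquiv, by simpa using hbe 0, by simpa using hbe 1, hbe 2⟩, ⟨e.symm⟩⟩
  rw [← DihedralCover.eval₂_cubic]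
  exact DihedralCover.eval₂_cubic_uElt_add_vElt F a
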